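/- Let χ > 1 and let V : (0, ∞) → (0, ∞) be a function such that for some S > 0 and all r > 0, V(r) ≥ (r√S/2)^{2χ/(2χ-1)} · V(r/2)^{χ/(2χ-1)}. Assume moreover that V(ρ)^{(χ/(2χ-1))^m} → 1 whenever ρ = r/2^m and m → ∞ (which holds if V(ρ) = b·ρ^n(1 + o(1)) as ρ → 0 for some b > 0 and n). Then there exists a constant C = C(χ, S) > 0 such that V(r) ≥ C·r^{2χ/(χ-1)} for all r > 0. -/

import Mathlib

/-!
Put `q = χ / (2χ - 1) ∈ (0, 1)` and `p = 2χ / (χ - 1)`, so that `p (1 - q) = 2q`. With this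
choice of `p` the powers of `r` cancel when the hypothesis is rewritten for `w(r) = log (V r / r ^ p)`:
it becomes the linear recursion `w(r) ≥ k + q · w(r / 2)` with the constant
`k = q log S - p log 2`. Iterating it `m` times gives
`w(r) ≥ k (1 + q + ⋯ + q^(m-1)) + q^m w(r / 2^m)`. The assumption on `V` makes the last term
tend to `0`, hence `w(r) ≥ k / (1 - q)`, i.e. `V r ≥ exp (k / (1 - q)) · r ^ p`.
-/

open Filter Topology Finset

section LinearRecursion

variable {u : ℕ → ℝ} {k q : ℝ}

theorem mul_sum_pow_add_pow_mul_le (hq : 0 ≤ q) (h : ∀ m, k + q * u (m + 1) ≤ u m) (m : ℕ) :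
    k * ∑ i ∈ range m, q ^ i + q ^ m * u m ≤ u 0 := by
  induction m with
  | zero => simp
  | succ m ih =>
    have hstep := mul_le_mul_of_nonneg_left (h m) (pow_nonneg hq m)
    rw [sum_range_succ, pow_succ]
    linarith

theorem div_one_sub_le_of_add_mul_succ_le (hq0 : 0 ≤ q) (hq1 : q < 1)
    (h : ∀ m, k + q * u (m + 1) ≤ u m) (hu : Tendsto (fun m => q ^ m * u m) atTop (𝓝 0)) :
    k / (1 - q) ≤ u 0 := by
  have hlim := ((hasSum_geometric_of_lt_one hq0 hq1).tendsto_sum_nat.const_mul k).add hu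
  rw [add_zero, ← div_eq_mul_inv] at hlim
  exact le_of_tendsto' hlim (mul_sum_pow_add_pow_mul_le hq0 h)

end LinearRecursion

theorem tendsto_pow_mul_log_div_two_pow {q r : ℝ} (hq0 : 0 ≤ q) (hq1 : q < 1) (hr : r ≠ 0) :
    Tendsto (fun m : ℕ => q ^ m * Real.log (r / 2 ^ m)) atTop (𝓝 0) := by
  have hlog (m : ℕ) : q ^ m * Real.log (r / 2 ^ m)
      = Real.log r * q ^ m - Real.log 2 * (m * q ^ m) := by
    rw [Real.log_div hr (by positivity), Real.log_pow]
    ring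
  simp_rw [hlog]
  simpa using ((tendsto_pow_atTop_nhds_zero_of_lt_one hq0 hq1).const_mul (Real.log r)).sub
    ((tendsto_self_mul_const_pow_of_lt_one hq0 hq1).const_mul (Real.log 2))

noncomputable def logVolumeRatio (p : ℝ) (V : ℝ → ℝ) (r : ℝ) : ℝ :=
  Real.log (V r) - p * Real.log r

section VolumeRatio

variable {p : ℝ} {V : ℝ → ℝ} {r : ℝ}

theorem add_mul_logVolumeRatio_half_le {S q : ℝ} (hS : 0 < S) (hp : p * (1 - q) = 2 * q)
    (hr : 0 < r) (hV : 0 < V (r / 2))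
    (h : (r * Real.sqrt S / 2) ^ (2 * q) * V (r / 2) ^ q ≤ V r) :
    q * Real.log S - p * Real.log 2 + q * logVolumeRatio p V (r / 2) ≤ logVolumeRatio p V r := by
  have hlog := Real.log_le_log (by positivity) h
  rw [Real.log_mul (by positivity) (by positivity), Real.log_rpow (by positivity),
    Real.log_rpow hV, Real.log_div (by positivity) two_ne_zero,
    Real.log_mul hr.ne' (by positivity), Real.log_sqrt hS.le] at hlog
  rw [logVolumeRatio, logVolumeRatio, Real.log_div hr.ne' two_ne_zero]
  linear_combination hlog + (Real.log r - Real.log 2) * hp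

theorem tendsto_pow_mul_logVolumeRatio {q : ℝ} (hq0 : 0 ≤ q) (hq1 : q < 1) (hr : r ≠ 0)
    (hV : ∀ m : ℕ, 0 < V (r / 2 ^ m))
    (hlim : Tendsto (fun m : ℕ => V (r / 2 ^ m) ^ (q ^ m)) atTop (𝓝 1)) :
    Tendsto (fun m : ℕ => q ^ m * logVolumeRatio p V (r / 2 ^ m)) atTop (𝓝 0) := by
  have hlogV : Tendsto (fun m : ℕ => q ^ m * Real.log (V (r / 2 ^ m))) atTop (𝓝 0) := by
    have h := (Real.continuousAt_log one_ne_zero).tendsto.comp hlim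
    rw [Real.log_one] at h
    refine h.congr fun m => ?_
    simp only [Function.comp_apply, Real.log_rpow (hV m)]
  simpa [logVolumeRatio, mul_sub, mul_left_comm] using
    hlogV.sub ((tendsto_pow_mul_log_div_two_pow hq0 hq1 hr).const_mul p)

theorem exp_mul_rpow_le_of_le_logVolumeRatio {c : ℝ} (hr : 0 < r) (hV : 0 < V r)
    (h : c ≤ logVolumeRatio p V r) : Real.exp c * r ^ p ≤ V r := by
  rw [Real.rpow_def_of_pos hr, ← Real.exp_add, ← Real.exp_log hV]
  apply Real.exp_le_exp.mpr
  rw [logVolumeRatio] at h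
  linarith

end VolumeRatio

/-- Abstract iteration lemma for the volume growth estimate. -/
theorem stmt_13 (χ S : ℝ) (hχ : 1 < χ) (hS : 0 < S) (V : ℝ → ℝ)
    (hVpos : ∀ r : ℝ, 0 < r → 0 < V r)
    (hiter : ∀ r : ℝ, 0 < r →
      (r * Real.sqrt S / 2) ^ (2 * χ / (2 * χ - 1)) * (V (r / 2)) ^ (χ / (2 * χ - 1)) ≤ V r)
    (hlim : ∀ r : ℝ, 0 < r →
      Tendsto (fun m : ℕ => (V (r / 2 ^ m)) ^ ((χ / (2 * χ - 1)) ^ m)) atTop (nhds 1)) :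
    ∃ C : ℝ, 0 < C ∧ ∀ r : ℝ, 0 < r → C * r ^ (2 * χ / (χ - 1)) ≤ V r := by
  set q := χ / (2 * χ - 1)
  set p := 2 * χ / (χ - 1)
  have hq0 : 0 ≤ q := div_nonneg (by linarith) (by linarith)
  have hq1 : q < 1 := (div_lt_one (by linarith)).mpr (by linarith)
  have hp : p * (1 - q) = 2 * q := by
    simp only [p, q]
    field_simp [show χ - 1 ≠ 0 by linarith, show 2 * χ - 1 ≠ 0 by linarith]
    ring
  have h2q : 2 * χ / (2 * χ - 1) = 2 * q := by ring
  refine ⟨Real.exp ((q * Real.log S - p * Real.log 2) / (1 - q)), Real.exp_pos _, fun r hr => ?_⟩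
  have hr' (m : ℕ) : 0 < r / 2 ^ m := by positivity
  have hstep (m : ℕ) : q * Real.log S - p * Real.log 2 + q * logVolumeRatio p V (r / 2 ^ (m + 1))
      ≤ logVolumeRatio p V (r / 2 ^ m) := by
    have hhalf : r / 2 ^ m / 2 = r / 2 ^ (m + 1) := by ring
    simpa only [hhalf] using add_mul_logVolumeRatio_half_le hS hp (hr' m)
      (hVpos _ (by positivity)) (h2q ▸ hiter _ (hr' m))
  have hbound := div_one_sub_le_of_add_mul_succ_le hq0 hq1 hstep
    (tendsto_pow_mul_logVolumeRatio hq0 hq1 hr.ne' (fun m => hVpos _ (hr' m)) (hlim r hr))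
  rw [pow_zero, div_one] at hbound
  exact exp_mul_rpow_le_of_le_logVolumeRatio hr (hVpos r hr) hbound
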